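/- arXiv:2305.04300 — 3 statements merged into one kernel-verified Lean document; each statement's English description precedes it below -/
import Mathlib

section
/- Let α ∈ (0,1) and let g ∈ L²(ℝ²₊) be compactly supported with supp g contained in a ball of radius R. Let v be the velocity given by the Biot–Savart law applied to g, i.e. v = -∇⊥(-Δ)^{-1+α/2}g. Then ‖v₂‖_{L²(ℝ²₊)} ≤ C ‖g‖_{L²(ℝ²₊)} for some constant C > 0 depending only on α and R. -/
noncomputable section

open MeasureTheory Real Set ENNReal NNReal

/-- Points of the plane `ℝ²`. -/
abbrev Pt : Type := EuclideanSpace ℝ (Fin 2)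

/-- The point `(a, b) ∈ ℝ²`. -/
def mk2 (a b : ℝ) : Pt := (WithLp.equiv 2 (Fin 2 → ℝ)).symm ![a, b]

/-- The (open) right half-plane `ℝ²₊ = {x : x₁ > 0}`. -/
def halfPlane : Set Pt := {x | 0 < x 0}

/-- The closed right half-plane `{x : x₁ ≥ 0}`. -/
def closedHalfPlane : Set Pt := {x | 0 ≤ x 0}

/-- Reflection `ỹ = (−y₁, y₂)` across the boundary of the half-plane. -/
def reflect (y : Pt) : Pt := mk2 (-(y 0)) (y 1)

/-- Rotation by 90 degrees: `(a₁,a₂)⊥ = (−a₂,a₁)`. -/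
def perp (a : Pt) : Pt := mk2 (-(a 1)) (a 0)

/-- The α-SQG Biot–Savart kernel on the half-plane:
`(x−y)⊥/|x−y|^{2+α} − (x−ỹ)⊥/|x−ỹ|^{2+α}`. -/
def sqgKernel (α : ℝ) (x y : Pt) : Pt :=
  (‖x - y‖ ^ (2 + α))⁻¹ • perp (x - y) - (‖x - reflect y‖ ^ (2 + α))⁻¹ • perp (x - reflect y)

/-- The velocity `u = -∇⊥(-Δ)^{-1+α/2} θ` on the half-plane, via the Biot–Savart law. -/
def biotSavart (α : ℝ) (θ : Pt → ℝ) (x : Pt) : Pt :=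
  ∫ y in halfPlane, θ y • sqgKernel α x y

/-- The partial derivative `∂ᵢ f` (with junk value `0` where `f` is not differentiable). -/
def pd (i : Fin 2) (f : Pt → ℝ) (x : Pt) : ℝ :=
  fderiv ℝ f x (EuclideanSpace.single i 1)

/-!
For `x, y` in the closed half-plane, `|x - ỹ| ≥ |x - y|`, so the Biot–Savart kernel is bounded by
`2 |x - y|^{-(1+α)}` and `|v(x)| ≤ 2 (|g| ⋆ |·|^{-(1+α)})(x)`. Split the Riesz kernel
`|·|^{-(1+α)}` at the unit sphere: the inner part is integrable since `1 + α < 2`, the outer part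
is square integrable since `2 (1 + α) > 2`. By Young's inequality the first convolution is
bounded by `‖g‖₂` and the second by `‖g‖₁`, which is at most `|B_R|^{1/2} ‖g‖₂` because `g` is
supported in a ball of radius `R`.
-/

open Metric Module

section LpBounds

variable {α : Type*} [MeasurableSpace α] {ν : Measure α}

theorem ENNReal.lintegral_mul_sq_le {w f : α → ℝ≥0∞} (hw : AEMeasurable w ν)
    (hf : AEMeasurable f ν) :
    (∫⁻ a, w a * f a ∂ν) ^ 2 ≤ (∫⁻ a, w a ∂ν) * ∫⁻ a, w a * f a ^ 2 ∂ν := by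
  have hsplit : ∀ a, w a * f a = w a ^ (1 / 2 : ℝ) * (w a * f a ^ 2) ^ (1 / 2 : ℝ) := by
    intro a
    rw [ENNReal.mul_rpow_of_nonneg _ _ (by norm_num), ← mul_assoc,
      ← ENNReal.rpow_add_of_nonneg _ _ (by norm_num) (by norm_num), ← ENNReal.rpow_natCast,
      ← ENNReal.rpow_mul]
    norm_num
  have hHolder := ENNReal.lintegral_mul_norm_pow_le hw (hw.mul (hf.pow_const 2))
    (by norm_num : (0 : ℝ) ≤ 1 / 2) (by norm_num : (0 : ℝ) ≤ 1 / 2) (by norm_num)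
  calc (∫⁻ a, w a * f a ∂ν) ^ 2
      = (∫⁻ a, w a ^ (1 / 2 : ℝ) * (w a * f a ^ 2) ^ (1 / 2 : ℝ) ∂ν) ^ 2 := by simp_rw [hsplit]
    _ ≤ ((∫⁻ a, w a ∂ν) ^ (1 / 2 : ℝ) * (∫⁻ a, w a * f a ^ 2 ∂ν) ^ (1 / 2 : ℝ)) ^ 2 := by
        gcongr
        exact hHolder
    _ = (∫⁻ a, w a ∂ν) * ∫⁻ a, w a * f a ^ 2 ∂ν := by
        rw [mul_pow, ← ENNReal.rpow_natCast, ← ENNReal.rpow_natCast (_ ^ _), ← ENNReal.rpow_mul,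
          ← ENNReal.rpow_mul]
        norm_num

theorem eLpNorm_two_sq_eq_lintegral {f : α → ℝ≥0∞} :
    eLpNorm f 2 ν ^ 2 = ∫⁻ a, f a ^ 2 ∂ν := by
  simpa using eLpNorm_nnreal_pow_eq_lintegral (f := f) (μ := ν) (p := 2) two_ne_zero

theorem eLpNorm_le_eLpNorm_mul_rpow_measure_of_support_subset {ε : Type*} [TopologicalSpace ε]
    [ENormedAddMonoid ε] {p q : ℝ≥0∞} (hpq : p ≤ q) {f : α → ε} (hf : AEStronglyMeasurable f ν)
    {s : Set α} (hs : f.support ⊆ s) :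
    eLpNorm f p ν ≤ eLpNorm f q ν * ν s ^ (1 / p.toReal - 1 / q.toReal) := by
  have := eLpNorm_le_eLpNorm_mul_rpow_measure_univ hpq (hf.restrict (s := s))
  rwa [eLpNorm_restrict_eq_of_support_subset hs, eLpNorm_restrict_eq_of_support_subset hs,
    Measure.restrict_apply_univ] at this

end LpBounds

section Young

variable {G : Type*} {mG : MeasurableSpace G} [AddCommGroup G] [MeasurableAdd₂ G]
  [MeasurableNeg G] {μ : Measure G} [SFinite μ] [μ.IsAddLeftInvariant] {f g : G → ℝ≥0∞}

theorem lintegral_lconvolution (hf : AEMeasurable f μ) (hg : AEMeasurable g μ) :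
    ∫⁻ x, (f ⋆ₗ[μ] g) x ∂μ = (∫⁻ x, f x ∂μ) * ∫⁻ x, g x ∂μ := by
  simp only [lconvolution_def]
  rw [lintegral_lintegral_swap (by fun_prop), ← lintegral_mul_const'' _ hf]
  refine lintegral_congr fun y => ?_
  rw [lintegral_const_mul'' _ (by fun_prop), lintegral_add_left_eq_self g (-y)]

theorem lconvolution_sq_le (hf : AEMeasurable f μ) (hg : AEMeasurable g μ) (x : G) :
    (f ⋆ₗ[μ] g) x ^ 2 ≤ (∫⁻ y, f y ∂μ) * (f ⋆ₗ[μ] (g ^ 2)) x :=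
  ENNReal.lintegral_mul_sq_le hf (by fun_prop)

theorem eLpNorm_lconvolution_le (hf : AEMeasurable f μ) (hg : AEMeasurable g μ) :
    eLpNorm (f ⋆ₗ[μ] g) 2 μ ≤ eLpNorm f 1 μ * eLpNorm g 2 μ := by
  rw [← ENNReal.pow_le_pow_left_iff two_ne_zero, mul_pow, eLpNorm_two_sq_eq_lintegral,
    eLpNorm_two_sq_eq_lintegral, eLpNorm_one_eq_lintegral_enorm]
  simp only [enorm_eq_self]
  calc ∫⁻ x, (f ⋆ₗ[μ] g) x ^ 2 ∂μ
      ≤ ∫⁻ x, (∫⁻ y, f y ∂μ) * (f ⋆ₗ[μ] (g ^ 2)) x ∂μ :=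
        lintegral_mono (lconvolution_sq_le hf hg)
    _ = (∫⁻ y, f y ∂μ) ^ 2 * ∫⁻ x, g x ^ 2 ∂μ := by
        have hg2 : AEMeasurable (g ^ 2) μ := hg.pow_const 2
        rw [lintegral_const_mul'' _ (aemeasurable_lconvolution hf hg2),
          lintegral_lconvolution hf hg2, ← mul_assoc, ← sq]
        rfl

theorem lconvolution_add {g₁ g₂ : G → ℝ≥0∞} (hf : AEMeasurable f μ)
    (hg₁ : AEMeasurable g₁ μ) :
    f ⋆ₗ[μ] (g₁ + g₂) = f ⋆ₗ[μ] g₁ + f ⋆ₗ[μ] g₂ := by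
  ext x
  simp only [lconvolution_def, Pi.add_apply, mul_add]
  exact lintegral_add_left' (by fun_prop) _

variable [μ.IsNegInvariant]

theorem eLpNorm_lconvolution_le' (hf : AEMeasurable f μ) (hg : AEMeasurable g μ) :
    eLpNorm (f ⋆ₗ[μ] g) 2 μ ≤ eLpNorm f 2 μ * eLpNorm g 1 μ := by
  rw [lconvolution_comm, mul_comm]
  exact eLpNorm_lconvolution_le hg hf

theorem eLpNorm_lconvolution_add_le {g₁ g₂ : G → ℝ≥0∞} (hf : AEMeasurable f μ)
    (hg₁ : AEMeasurable g₁ μ) (hg₂ : AEMeasurable g₂ μ) :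
    eLpNorm (f ⋆ₗ[μ] (g₁ + g₂)) 2 μ
      ≤ eLpNorm f 2 μ * eLpNorm g₁ 1 μ + eLpNorm f 1 μ * eLpNorm g₂ 2 μ := by
  rw [lconvolution_add hf hg₁]
  refine (eLpNorm_add_le (aemeasurable_lconvolution hf hg₁).aestronglyMeasurable
    (aemeasurable_lconvolution hf hg₂).aestronglyMeasurable one_le_two).trans ?_
  exact add_le_add (eLpNorm_lconvolution_le' hf hg₁) (eLpNorm_lconvolution_le hf hg₂)

end Young

section RieszKernel

variable {E : Type*} [NormedAddCommGroup E] {s : ℝ}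

/-- Valued in `ℝ≥0∞`, so that it is `⊤` at the origin when `0 < s`: pointwise kernel bounds then
hold on the diagonal too. -/
def rieszKernel (s : ℝ) (z : E) : ℝ≥0∞ := ‖z‖ₑ ^ (-s)

theorem rieszKernel_of_ne_zero {z : E} (hz : z ≠ 0) :
    rieszKernel s z = ENNReal.ofReal (‖z‖ ^ (-s)) := by
  rw [rieszKernel, ← ofReal_norm, ENNReal.ofReal_rpow_of_pos (norm_pos_iff.2 hz)]

theorem measurable_rieszKernel [MeasurableSpace E] [OpensMeasurableSpace E] :
    Measurable (rieszKernel (E := E) s) :=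
  measurable_enorm.pow_const _

theorem rieszKernel_sq (z : E) : rieszKernel s z ^ 2 = rieszKernel (2 * s) z := by
  rw [rieszKernel, rieszKernel, ← ENNReal.rpow_natCast, ← ENNReal.rpow_mul]
  ring_nf

variable [NormedSpace ℝ E] [FiniteDimensional ℝ E] [MeasurableSpace E] [BorelSpace E]
  {μ : Measure E} [μ.IsAddHaarMeasure]

theorem lintegral_ball_rieszKernel_lt_top (hd : 1 ≤ finrank ℝ E) (hs : s < finrank ℝ E) :
    ∫⁻ z in ball 0 1, rieszKernel s z ∂μ < ⊤ := by
  have : Nontrivial E := Module.nontrivial_of_finrank_pos (R := ℝ) (by omega)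
  have hint : IntegrableOn (fun z : E => ‖z‖ ^ (-s)) (ball 0 1) μ :=
    integrableOn_ball_of_norm_le_rpow hd hs (C := 1)
      (ae_of_all _ fun z => by simp [abs_of_nonneg (Real.rpow_nonneg (norm_nonneg z) _)])
      (measurable_norm.pow_const _).aestronglyMeasurable
  refine lt_of_eq_of_lt (lintegral_congr_ae ?_) hint.2
  filter_upwards [ae_restrict_of_ae (compl_mem_ae_iff.2 (measure_singleton (μ := μ) (0 : E)))]
    with z hz
  rw [rieszKernel_of_ne_zero hz, Real.enorm_of_nonneg (Real.rpow_nonneg (norm_nonneg z) _)]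

theorem lintegral_compl_ball_rieszKernel_lt_top (hs : finrank ℝ E < s) :
    ∫⁻ z in (ball 0 1)ᶜ, rieszKernel s z ∂μ < ⊤ := by
  have hbound : ∀ z ∈ (ball (0 : E) 1)ᶜ,
      rieszKernel s z ≤ ENNReal.ofReal (2 ^ s) * ENNReal.ofReal ((1 + ‖z‖) ^ (-s)) := by
    intro z hz
    have h1 : 1 ≤ ‖z‖ := by simpa using hz
    rw [rieszKernel_of_ne_zero (norm_pos_iff.1 (by linarith)),
      ← ENNReal.ofReal_mul (by positivity)]
    refine ENNReal.ofReal_le_ofReal ?_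
    calc ‖z‖ ^ (-s) ≤ ((1 + ‖z‖) / 2) ^ (-s) :=
          Real.rpow_le_rpow_of_nonpos (by positivity) (by linarith) (by linarith)
      _ = 2 ^ s * (1 + ‖z‖) ^ (-s) := by
          rw [Real.div_rpow (by positivity) (by norm_num),
            Real.rpow_neg (by norm_num : (0 : ℝ) ≤ 2), div_inv_eq_mul, mul_comm]
  calc ∫⁻ z in (ball 0 1)ᶜ, rieszKernel s z ∂μ
      ≤ ∫⁻ z in (ball 0 1)ᶜ, ENNReal.ofReal (2 ^ s) * ENNReal.ofReal ((1 + ‖z‖) ^ (-s)) ∂μ :=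
        setLIntegral_mono' measurableSet_ball.compl hbound
    _ ≤ ∫⁻ z, ENNReal.ofReal (2 ^ s) * ENNReal.ofReal ((1 + ‖z‖) ^ (-s)) ∂μ :=
        setLIntegral_le_lintegral _ _
    _ < ⊤ := by
        rw [lintegral_const_mul' _ _ ofReal_ne_top]
        exact mul_lt_top ofReal_lt_top (finite_integral_one_add_norm hs)

theorem eLpNorm_indicator_ball_rieszKernel_lt_top (hd : 1 ≤ finrank ℝ E)
    (hs : s < finrank ℝ E) :
    eLpNorm ((ball 0 1).indicator (rieszKernel s)) 1 μ < ⊤ := by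
  rw [eLpNorm_indicator_eq_eLpNorm_restrict measurableSet_ball, eLpNorm_one_eq_lintegral_enorm]
  exact lintegral_ball_rieszKernel_lt_top hd hs

theorem eLpNorm_indicator_compl_ball_rieszKernel_lt_top (hs : finrank ℝ E < 2 * s) :
    eLpNorm ((ball 0 1)ᶜ.indicator (rieszKernel s)) 2 μ < ⊤ := by
  have hsq : eLpNorm (rieszKernel s) 2 (μ.restrict (ball 0 1)ᶜ) ^ 2 < ⊤ := by
    simpa only [eLpNorm_two_sq_eq_lintegral, rieszKernel_sq]
      using lintegral_compl_ball_rieszKernel_lt_top hs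
  rw [eLpNorm_indicator_eq_eLpNorm_restrict measurableSet_ball.compl]
  simpa using hsq

end RieszKernel

section HalfPlane

theorem mk2_apply_zero (a b : ℝ) : mk2 a b 0 = a := by simp [mk2]

theorem mk2_apply_one (a b : ℝ) : mk2 a b 1 = b := by simp [mk2]

theorem norm_mk2 (a b : ℝ) : ‖mk2 a b‖ = √(a ^ 2 + b ^ 2) := by
  simp [EuclideanSpace.norm_eq, Fin.sum_univ_two, mk2_apply_zero, mk2_apply_one]

theorem norm_pt_eq_sqrt (x : Pt) : ‖x‖ = √(x 0 ^ 2 + x 1 ^ 2) := by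
  simp [EuclideanSpace.norm_eq, Fin.sum_univ_two]

theorem norm_perp (a : Pt) : ‖perp a‖ = ‖a‖ := by
  rw [perp, norm_mk2, norm_pt_eq_sqrt, neg_sq, add_comm]

theorem measurableSet_halfPlane : MeasurableSet halfPlane :=
  measurableSet_lt measurable_const (EuclideanSpace.proj (0 : Fin 2)).continuous.measurable

theorem norm_sub_le_norm_sub_reflect {x y : Pt} (hx : 0 ≤ x 0) (hy : 0 ≤ y 0) :
    ‖x - y‖ ≤ ‖x - reflect y‖ := by
  rw [norm_pt_eq_sqrt, norm_pt_eq_sqrt]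
  refine Real.sqrt_le_sqrt ?_
  simp only [PiLp.sub_apply, reflect, mk2_apply_zero, mk2_apply_one]
  nlinarith [mul_nonneg hx hy]

theorem norm_inv_rpow_smul_perp {α : ℝ} {a : Pt} (ha : a ≠ 0) :
    ‖(‖a‖ ^ (2 + α))⁻¹ • perp a‖ = ‖a‖ ^ (-(1 + α)) := by
  have ha' : 0 < ‖a‖ := norm_pos_iff.2 ha
  rw [norm_smul, norm_perp, norm_inv, Real.norm_of_nonneg (by positivity), ← Real.rpow_neg ha'.le,
    ← Real.rpow_add_one ha'.ne']
  ring_nf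

theorem enorm_sqgKernel_le {α : ℝ} (hα : -1 < α) {x y : Pt} (hx : 0 ≤ x 0) (hy : 0 ≤ y 0) :
    ‖sqgKernel α x y‖ₑ ≤ 2 * rieszKernel (1 + α) (x - y) := by
  rcases eq_or_ne x y with rfl | hxy
  · rw [sub_self, rieszKernel, enorm_zero, ENNReal.zero_rpow_of_neg (by linarith),
      mul_top two_ne_zero]
    exact le_top
  have hxy' : x - y ≠ 0 := sub_ne_zero.2 hxy
  have hle := norm_sub_le_norm_sub_reflect hx hy
  have hrefl : x - reflect y ≠ 0 := norm_pos_iff.1 ((norm_pos_iff.2 hxy').trans_le hle)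
  have hnorm : ‖sqgKernel α x y‖ ≤ 2 * ‖x - y‖ ^ (-(1 + α)) :=
    calc ‖sqgKernel α x y‖
        ≤ ‖x - y‖ ^ (-(1 + α)) + ‖x - reflect y‖ ^ (-(1 + α)) := by
          rw [← norm_inv_rpow_smul_perp hxy', ← norm_inv_rpow_smul_perp hrefl]
          exact norm_sub_le _ _
      _ ≤ ‖x - y‖ ^ (-(1 + α)) + ‖x - y‖ ^ (-(1 + α)) :=
          add_le_add le_rfl (Real.rpow_le_rpow_of_nonpos (norm_pos_iff.2 hxy') hle (by linarith))
      _ = 2 * ‖x - y‖ ^ (-(1 + α)) := by ring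
  rw [rieszKernel_of_ne_zero hxy', ← ofReal_norm]
  refine (ENNReal.ofReal_le_ofReal hnorm).trans_eq ?_
  rw [ENNReal.ofReal_mul zero_le_two, ENNReal.ofReal_ofNat]

theorem enorm_biotSavart_le {α : ℝ} (hα : -1 < α) (g : Pt → ℝ) {x : Pt} (hx : 0 ≤ x 0) :
    ‖biotSavart α g x‖ₑ
      ≤ 2 * ((‖halfPlane.indicator g ·‖ₑ) ⋆ₗ rieszKernel (1 + α)) x := by
  calc ‖biotSavart α g x‖ₑ
      ≤ ∫⁻ y in halfPlane, ‖g y • sqgKernel α x y‖ₑ := enorm_integral_le_lintegral_enorm _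
    _ = ∫⁻ y in halfPlane, ‖g y‖ₑ * ‖sqgKernel α x y‖ₑ := by simp only [enorm_smul]
    _ ≤ ∫⁻ y in halfPlane, ‖g y‖ₑ * (2 * rieszKernel (1 + α) (x - y)) :=
        setLIntegral_mono' measurableSet_halfPlane fun y hy => by
          gcongr
          exact enorm_sqgKernel_le hα hx (le_of_lt hy)
    _ = 2 * ((‖halfPlane.indicator g ·‖ₑ) ⋆ₗ rieszKernel (1 + α)) x := by
        rw [lconvolution_def, ← lintegral_const_mul' _ _ ofNat_ne_top,
          ← lintegral_indicator measurableSet_halfPlane]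
        refine lintegral_congr fun y => ?_
        by_cases hy : y ∈ halfPlane <;> simp [hy, neg_add_eq_sub, mul_left_comm]

theorem eLpNorm_biotSavart_apply_one_le {α : ℝ} (hα : -1 < α) {g : Pt → ℝ}
    (hg : AEStronglyMeasurable g (volume.restrict halfPlane)) :
    eLpNorm (fun x => biotSavart α g x 1) 2 (volume.restrict halfPlane)
      ≤ 2 * (eLpNorm g 2 (volume.restrict halfPlane)
              * eLpNorm ((ball (0 : Pt) 1).indicator (rieszKernel (1 + α))) 1 volume
            + eLpNorm (halfPlane.indicator g) 1 volume
              * eLpNorm ((ball (0 : Pt) 1)ᶜ.indicator (rieszKernel (1 + α))) 2 volume) := by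
  set G := fun y => ‖halfPlane.indicator g y‖ₑ
  have hG : AEMeasurable G :=
    ((aestronglyMeasurable_indicator_iff measurableSet_halfPlane).2 hg).enorm
  have hpt : ∀ᵐ x ∂volume.restrict halfPlane,
      ‖biotSavart α g x 1‖ₑ ≤ (2 : ℝ≥0) * ‖(G ⋆ₗ rieszKernel (1 + α)) x‖ₑ := by
    filter_upwards [ae_restrict_mem measurableSet_halfPlane] with x hx
    refine (PiLp.enorm_apply_le _ _).trans ?_
    simpa using enorm_biotSavart_le hα g (le_of_lt hx)
  have h₁ : AEMeasurable ((ball (0 : Pt) 1).indicator (rieszKernel (1 + α))) :=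
    (measurable_rieszKernel.indicator measurableSet_ball).aemeasurable
  have h₂ : AEMeasurable ((ball (0 : Pt) 1)ᶜ.indicator (rieszKernel (1 + α))) :=
    (measurable_rieszKernel.indicator measurableSet_ball.compl).aemeasurable
  have hYoung := eLpNorm_lconvolution_add_le hG h₁ h₂
  rw [(ball (0 : Pt) 1).indicator_self_add_compl, eLpNorm_enorm, eLpNorm_enorm,
    eLpNorm_indicator_eq_eLpNorm_restrict measurableSet_halfPlane] at hYoung
  calc eLpNorm (fun x => biotSavart α g x 1) 2 (volume.restrict halfPlane)
      ≤ 2 * eLpNorm (G ⋆ₗ rieszKernel (1 + α)) 2 (volume.restrict halfPlane) := by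
        simpa using eLpNorm_le_mul_eLpNorm_of_ae_le_mul' hpt 2
    _ ≤ 2 * eLpNorm (G ⋆ₗ rieszKernel (1 + α)) 2 volume := by
        gcongr
        exact Measure.restrict_le_self
    _ ≤ _ := by gcongr

theorem eLpNorm_indicator_halfPlane_one_le {g : Pt → ℝ}
    (hg : AEStronglyMeasurable g (volume.restrict halfPlane)) {c : Pt} {R : ℝ}
    (hc : closedHalfPlane ∩ Function.support g ⊆ closedBall c R) :
    eLpNorm (halfPlane.indicator g) 1 volume
      ≤ volume (closedBall (0 : Pt) R) ^ (1 / 2 : ℝ) * eLpNorm g 2 (volume.restrict halfPlane) := by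
  have hsupp : (halfPlane.indicator g).support ⊆ closedBall c R := fun y hy => by
    obtain ⟨hyH, hgy⟩ := Set.indicator_apply_ne_zero.1 hy
    exact hc ⟨le_of_lt (show 0 < y 0 from hyH), hgy⟩
  have := eLpNorm_le_eLpNorm_mul_rpow_measure_of_support_subset one_le_two
    ((aestronglyMeasurable_indicator_iff measurableSet_halfPlane).2 hg) hsupp
  rw [eLpNorm_indicator_eq_eLpNorm_restrict (p := 2) measurableSet_halfPlane,
    Measure.addHaar_closedBall_center, mul_comm] at this
  convert this using 3
  norm_num

def velocityBound (α R : ℝ) : ℝ≥0∞ :=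
  2 * (eLpNorm ((ball (0 : Pt) 1).indicator (rieszKernel (1 + α))) 1 volume
    + volume (closedBall (0 : Pt) R) ^ (1 / 2 : ℝ)
      * eLpNorm ((ball (0 : Pt) 1)ᶜ.indicator (rieszKernel (1 + α))) 2 volume)

theorem velocityBound_ne_top {α : ℝ} (hα0 : 0 < α) (hα1 : α < 1) (R : ℝ) :
    velocityBound α R ≠ ⊤ := by
  have hd : (finrank ℝ Pt : ℝ) = 2 := by simp
  have hN₁ := eLpNorm_indicator_ball_rieszKernel_lt_top (μ := (volume : Measure Pt)) (s := 1 + α)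
    (by simp) (by rw [hd]; linarith)
  have hN₂ := eLpNorm_indicator_compl_ball_rieszKernel_lt_top (μ := (volume : Measure Pt))
    (s := 1 + α) (by rw [hd]; linarith)
  have hV : volume (closedBall (0 : Pt) R) ^ (1 / 2 : ℝ) < ⊤ :=
    ENNReal.rpow_lt_top_of_nonneg (by norm_num) measure_closedBall_lt_top.ne
  rw [velocityBound]
  finiteness

theorem eLpNorm_biotSavart_apply_one_le_velocityBound {α : ℝ} (hα : -1 < α) {g : Pt → ℝ}
    (hg : AEStronglyMeasurable g (volume.restrict halfPlane)) {c : Pt} {R : ℝ}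
    (hc : closedHalfPlane ∩ Function.support g ⊆ closedBall c R) :
    eLpNorm (fun x => biotSavart α g x 1) 2 (volume.restrict halfPlane)
      ≤ velocityBound α R * eLpNorm g 2 (volume.restrict halfPlane) := by
  refine (eLpNorm_biotSavart_apply_one_le hα hg).trans ?_
  rw [velocityBound]
  calc _ ≤ 2 * (eLpNorm g 2 (volume.restrict halfPlane) * _
          + volume (closedBall (0 : Pt) R) ^ (1 / 2 : ℝ) * eLpNorm g 2 (volume.restrict halfPlane)
            * _) := by
        gcongr
        exact eLpNorm_indicator_halfPlane_one_le hg hc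
    _ = _ := by ring

end HalfPlane

theorem velocity_second_component_L2_general (α : ℝ) (hα0 : 0 < α) (hα1 : α < 1) (R : ℝ) :
    ∃ C : ℝ, 0 < C ∧
      ∀ g : Pt → ℝ,
        MemLp g 2 ((volume : Measure Pt).restrict halfPlane) →
        (∃ c : Pt, closedHalfPlane ∩ Function.support g ⊆ Metric.closedBall c R) →
        eLpNorm (fun x => biotSavart α g x 1) 2 ((volume : Measure Pt).restrict halfPlane)
          ≤ ENNReal.ofReal C * eLpNorm g 2 ((volume : Measure Pt).restrict halfPlane) := by
  refine ⟨(velocityBound α R).toReal + 1, by positivity, fun g hg ⟨c, hc⟩ => ?_⟩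
  refine (eLpNorm_biotSavart_apply_one_le_velocityBound (by linarith) hg.1 hc).trans ?_
  gcongr
  exact (ENNReal.le_ofReal_iff_toReal_le (velocityBound_ne_top hα0 hα1 R) (by positivity)).2
    (by linarith)

/-- **`L²` estimate for the second velocity component** (Lemma 2.3, (2.6)): for
compactly supported `g ∈ L²(ℝ²₊)`, the Biot–Savart velocity satisfies
`‖v₂‖_{L²} ≤ C ‖g‖_{L²}`, with `C` depending only on `α` and the radius `R` of a ball
containing the support of `g`. -/
theorem velocity_second_component_L2 (α : ℝ) (hα0 : 0 < α) (hα1 : α < 1) (R : ℝ)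
    (hR : 0 < R) :
    ∃ C : ℝ, 0 < C ∧
      ∀ g : Pt → ℝ,
        MemLp g 2 ((volume : Measure Pt).restrict halfPlane) →
        (∃ c : Pt, closedHalfPlane ∩ Function.support g ⊆ Metric.closedBall c R) →
        eLpNorm (fun x => biotSavart α g x 1) 2 ((volume : Measure Pt).restrict halfPlane)
          ≤ ENNReal.ofReal C * eLpNorm g 2 ((volume : Measure Pt).restrict halfPlane) :=
  velocity_second_component_L2_general α hα0 hα1 R
end
end

section
/- Let α ∈ (0,1). Then the integral ∫_{{z ∈ ℝ² : 0 ≤ z₁ ≤ 1/2}} |(1−z₁, z₂)|^{−(2+α)} z₁^{−(1−α)} dz is finite. Consequently, for every x ∈ ℝ²₊, the change of variables y = (x₁z₁, x₂ + x₁z₂) gives ∫_{{y : 0 ≤ y₁ ≤ x₁/2}} |x−y|^{−(2+α)} y₁^{−(1−α)} dy ≤ C x₁^{−1} with C depending only on α. -/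
noncomputable section

open MeasureTheory Real Set ENNReal NNReal

/-! On the strip `0 ≤ y₁ ≤ x₁/2` one has `|x₁ - y₁| ≥ x₁/2`, hence
`|x - y| ≥ (x₁/2 + |x₂ - y₂|)/2`, so the integrand is dominated by the product
`2^{2+α} (x₁/2 + |x₂ - y₂|)^{-(2+α)} · y₁^{α-1}`. By Fubini its integral is
`∫₀^{x₁/2} y₁^{α-1} dy₁ = (x₁/2)^α / α` times
`∫ (x₁/2 + |s|)^{-(2+α)} ds = (x₁/2)^{-1-α} ∫ (1 + |u|)^{-(2+α)} du` (by scaling),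
a multiple of `x₁⁻¹`. The model integral is the case `x = (1, 0)`. -/

def ptEquivProd : Pt ≃ᵐ ℝ × ℝ :=
  (MeasurableEquiv.toLp 2 (Fin 2 → ℝ)).symm.trans MeasurableEquiv.finTwoArrow

lemma ptEquivProd_apply (y : Pt) : ptEquivProd y = (y 0, y 1) := rfl

lemma measurePreserving_ptEquivProd : MeasurePreserving ptEquivProd volume volume :=
  (volume_preserving_finTwoArrow ℝ).comp
    (EuclideanSpace.volume_preserving_symm_measurableEquiv_toLp (Fin 2))

lemma ptEquivProd_preimage_prod_univ (s : Set ℝ) :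
    ptEquivProd ⁻¹' (s ×ˢ univ) = {y : Pt | y 0 ∈ s} := by
  ext y
  simp [ptEquivProd_apply]

lemma volume_restrict_prod_univ (s : Set ℝ) :
    (volume : Measure (ℝ × ℝ)).restrict (s ×ˢ univ) = (volume.restrict s).prod volume := by
  rw [Measure.volume_eq_prod, ← Measure.prod_restrict, Measure.restrict_univ]

section ProductOnStrip

variable {s : Set ℝ} {f g : ℝ → ℝ}

lemma integrableOn_coord_mul (hf : IntegrableOn f s) (hg : Integrable g) :
    IntegrableOn (fun y : Pt => f (y 0) * g (y 1)) {y | y 0 ∈ s} := by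
  rw [← ptEquivProd_preimage_prod_univ]
  refine (measurePreserving_ptEquivProd.integrableOn_comp_preimage
    ptEquivProd.measurableEmbedding (f := fun z : ℝ × ℝ => f z.1 * g z.2)).2 ?_
  rw [IntegrableOn, volume_restrict_prod_univ]
  exact hf.mul_prod hg

lemma setIntegral_coord_mul (s : Set ℝ) (f g : ℝ → ℝ) :
    ∫ y in {y : Pt | y 0 ∈ s}, f (y 0) * g (y 1) = (∫ t in s, f t) * ∫ t, g t := by
  rw [← ptEquivProd_preimage_prod_univ]
  refine (measurePreserving_ptEquivProd.setIntegral_preimage_emb ptEquivProd.measurableEmbedding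
    (fun z : ℝ × ℝ => f z.1 * g z.2) _).trans ?_
  rw [volume_restrict_prod_univ]
  exact integral_prod_mul f g

end ProductOnStrip

section OneDimensional

variable {p q b c : ℝ}

lemma eqOn_inv_rpow_Icc (q b : ℝ) :
    EqOn (fun t : ℝ => (t ^ q)⁻¹) (fun t => t ^ (-q)) (Icc 0 b) :=
  fun _ ht => (Real.rpow_neg ht.1 q).symm

lemma integrableOn_inv_rpow_Icc (hq : q < 1) (hb : 0 ≤ b) :
    IntegrableOn (fun t : ℝ => (t ^ q)⁻¹) (Icc 0 b) := by
  have h := intervalIntegral.intervalIntegrable_rpow' (a := 0) (b := b) (neg_lt_neg hq)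
  rw [intervalIntegrable_iff_integrableOn_Ioc_of_le hb, ← integrableOn_Icc_iff_integrableOn_Ioc]
    at h
  exact h.congr_fun (eqOn_inv_rpow_Icc q b).symm measurableSet_Icc

lemma setIntegral_inv_rpow_Icc (hq : q < 1) (hb : 0 ≤ b) :
    ∫ t in Icc 0 b, (t ^ q)⁻¹ = b ^ (1 - q) / (1 - q) := by
  rw [setIntegral_congr_fun measurableSet_Icc (eqOn_inv_rpow_Icc q b), integral_Icc_eq_integral_Ioc,
    ← intervalIntegral.integral_of_le hb, integral_rpow (Or.inl (neg_lt_neg hq)),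
    Real.zero_rpow (by linarith)]
  ring_nf

lemma integrable_rpow_neg_one_add_abs (hp : 1 < p) :
    Integrable fun u : ℝ => (1 + |u|) ^ (-p) := by
  simpa [Real.norm_eq_abs] using integrable_one_add_norm (E := ℝ) (μ := volume) (r := p)
    (by simpa using hp)

lemma integral_rpow_neg_one_add_abs_pos (hp : 1 < p) :
    0 < ∫ u : ℝ, (1 + |u|) ^ (-p) :=
  integral_pos_of_integrable_nonneg_nonzero (x := 0)
    (Continuous.rpow_const (by fun_prop) fun _ => Or.inl (by positivity))
    (integrable_rpow_neg_one_add_abs hp) (fun _ => by positivity) (by simp)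

lemma rpow_neg_add_abs_eq (hc : 0 < c) (p u : ℝ) :
    (c + |u|) ^ (-p) = c ^ (-p) * (1 + |c⁻¹ * u|) ^ (-p) := by
  have h : c + |u| = c * (1 + |c⁻¹ * u|) := by
    rw [abs_mul, abs_of_pos (inv_pos.2 hc)]
    field_simp
  rw [h, Real.mul_rpow hc.le (by positivity)]

lemma integrable_rpow_neg_add_abs_sub (hp : 1 < p) (hc : 0 < c) (d : ℝ) :
    Integrable fun s : ℝ => (c + |d - s|) ^ (-p) := by
  simp_rw [rpow_neg_add_abs_eq hc p]
  exact (((integrable_rpow_neg_one_add_abs hp).comp_mul_left' (inv_ne_zero hc.ne')).comp_sub_left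
    d).const_mul _

lemma integral_rpow_neg_add_abs_sub (hc : 0 < c) (p d : ℝ) :
    ∫ s : ℝ, (c + |d - s|) ^ (-p) = c ^ (1 - p) * ∫ u : ℝ, (1 + |u|) ^ (-p) := by
  simp_rw [rpow_neg_add_abs_eq hc p]
  rw [integral_const_mul, integral_sub_left_eq_self (fun s => (1 + |c⁻¹ * s|) ^ (-p)),
    Measure.integral_comp_mul_left (fun u => (1 + |u|) ^ (-p)), inv_inv, abs_of_pos hc,
    smul_eq_mul, ← mul_assoc, ← Real.rpow_add_one hc.ne']
  ring_nf

end OneDimensional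

lemma inv_norm_rpow_le {w : Pt} {c p : ℝ} (hc : 0 < c) (hp : 0 ≤ p) (hw : c ≤ |w 0|) :
    (‖w‖ ^ p)⁻¹ ≤ 2 ^ p * (c + |w 1|) ^ (-p) := by
  have hw0 := PiLp.norm_apply_le w 0
  have hw1 := PiLp.norm_apply_le w 1
  rw [Real.norm_eq_abs] at hw0 hw1
  have hpos : 0 < c + |w 1| := by positivity
  calc (‖w‖ ^ p)⁻¹ ≤ (((c + |w 1|) / 2) ^ p)⁻¹ :=
        inv_anti₀ (by positivity) (Real.rpow_le_rpow (by positivity) (by linarith) hp)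
    _ = 2 ^ p * (c + |w 1|) ^ (-p) := by
        rw [Real.div_rpow hpos.le zero_le_two, inv_div, div_eq_mul_inv, Real.rpow_neg hpos.le]

section Strip

variable {p q : ℝ} {x : Pt}

def stripMajorant (p q c d : ℝ) (y : Pt) : ℝ :=
  (y 0 ^ q)⁻¹ * (2 ^ p * (c + |d - y 1|) ^ (-p))

lemma integrableOn_stripMajorant (hp : 1 < p) (hq : q < 1) {c : ℝ} (hc : 0 < c) (d : ℝ) :
    IntegrableOn (stripMajorant p q c d) {y | y 0 ∈ Icc 0 c} :=
  integrableOn_coord_mul (integrableOn_inv_rpow_Icc hq hc.le)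
    ((integrable_rpow_neg_add_abs_sub hp hc d).const_mul _)

lemma setIntegral_stripMajorant (hq : q < 1) {c : ℝ} (hc : 0 < c) (p d : ℝ) :
    ∫ y in {y | y 0 ∈ Icc 0 c}, stripMajorant p q c d y
      = 2 ^ p * (∫ u : ℝ, (1 + |u|) ^ (-p)) / (1 - q) * c ^ (2 - p - q) := by
  refine (setIntegral_coord_mul (Icc 0 c) (fun t => (t ^ q)⁻¹)
    (fun s => 2 ^ p * (c + |d - s|) ^ (-p))).trans ?_
  rw [setIntegral_inv_rpow_Icc hq hc.le, integral_const_mul,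
    integral_rpow_neg_add_abs_sub hc, show 2 - p - q = (1 - q) + (1 - p) by ring,
    Real.rpow_add hc]
  ring

lemma kernel_nonneg (p q : ℝ) (x : Pt) {y : Pt} (hy : 0 ≤ y 0) :
    0 ≤ (‖x - y‖ ^ p)⁻¹ * (y 0 ^ q)⁻¹ := by
  positivity

lemma kernel_le_stripMajorant (hp : 0 ≤ p) (hx : 0 < x 0) {y : Pt}
    (hy : y 0 ∈ Icc 0 (x 0 / 2)) :
    (‖x - y‖ ^ p)⁻¹ * (y 0 ^ q)⁻¹ ≤ stripMajorant p q (x 0 / 2) (x 1) y := by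
  obtain ⟨hy0, hy1⟩ := hy
  have hdist : x 0 / 2 ≤ |(x - y) 0| := by
    rw [PiLp.sub_apply, abs_of_nonneg (by linarith)]
    linarith
  rw [mul_comm]
  exact mul_le_mul_of_nonneg_left (inv_norm_rpow_le (by positivity) hp hdist) (by positivity)

lemma measurableSet_strip (c : ℝ) : MeasurableSet {y : Pt | y 0 ∈ Icc 0 c} :=
  measurableSet_Icc.preimage (by fun_prop)

theorem integrableOn_kernel_strip (hp : 1 < p) (hq : q < 1) (hx : 0 < x 0) :
    IntegrableOn (fun y : Pt => (‖x - y‖ ^ p)⁻¹ * (y 0 ^ q)⁻¹) {y | y 0 ∈ Icc 0 (x 0 / 2)} := by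
  refine (integrableOn_stripMajorant hp hq (by positivity) (x 1)).mono' (by fun_prop) ?_
  filter_upwards [ae_restrict_mem (measurableSet_strip _)] with y hy
  rw [Real.norm_of_nonneg (kernel_nonneg p q x hy.1)]
  exact kernel_le_stripMajorant (by linarith) hx hy

theorem setIntegral_kernel_strip_le (hp : 1 < p) (hq : q < 1) (hx : 0 < x 0) :
    ∫ y in {y : Pt | y 0 ∈ Icc 0 (x 0 / 2)}, (‖x - y‖ ^ p)⁻¹ * (y 0 ^ q)⁻¹
      ≤ 2 ^ p * (∫ u : ℝ, (1 + |u|) ^ (-p)) / (1 - q) * (x 0 / 2) ^ (2 - p - q) := by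
  rw [← setIntegral_stripMajorant hq (by positivity) p (x 1)]
  refine integral_mono_of_nonneg ?_ (integrableOn_stripMajorant hp hq (by positivity) (x 1)) ?_
  · filter_upwards [ae_restrict_mem (measurableSet_strip _)] with y hy
    exact kernel_nonneg p q x hy.1
  · filter_upwards [ae_restrict_mem (measurableSet_strip _)] with y hy
    exact kernel_le_stripMajorant (by linarith) hx hy

end Strip

theorem model_integral_bound_general (α : ℝ) (hα0 : 0 < α) :
    IntegrableOn
      (fun z : Pt => (‖mk2 (1 - z 0) (z 1)‖ ^ (2 + α))⁻¹ * ((z 0) ^ (1 - α))⁻¹)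
      {z : Pt | 0 ≤ z 0 ∧ z 0 ≤ 1 / 2} volume ∧
    ∃ C : ℝ, 0 < C ∧
      ∀ x : Pt, x ∈ halfPlane →
        (∫ y in {y : Pt | 0 ≤ y 0 ∧ y 0 ≤ x 0 / 2},
            (‖x - y‖ ^ (2 + α))⁻¹ * ((y 0) ^ (1 - α))⁻¹)
          ≤ C * (x 0)⁻¹ := by
  have hp : 1 < 2 + α := by linarith
  have hq : 1 - α < 1 := by linarith
  refine ⟨?_, ?_⟩
  · have hnorm (z : Pt) : ‖mk2 (1 - z 0) (z 1)‖ = ‖mk2 1 0 - z‖ := by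
      simp [EuclideanSpace.norm_eq, mk2, Fin.sum_univ_two]
    have h10 : mk2 1 0 0 = 1 := by simp [mk2]
    have h := integrableOn_kernel_strip hp hq (x := mk2 1 0) (by simp [h10])
    simp_rw [← hnorm, h10] at h
    exact h
  · set K := ∫ u : ℝ, (1 + |u|) ^ (-(2 + α))
    have hK : 0 < K := integral_rpow_neg_one_add_abs_pos hp
    refine ⟨2 * (2 ^ (2 + α) * K / α), by positivity, fun x hx => ?_⟩
    calc _ ≤ 2 ^ (2 + α) * K / (1 - (1 - α)) * (x 0 / 2) ^ (2 - (2 + α) - (1 - α)) :=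
          setIntegral_kernel_strip_le hp hq hx
      _ = 2 * (2 ^ (2 + α) * K / α) * (x 0)⁻¹ := by
          rw [show 2 - (2 + α) - (1 - α) = -1 by ring, Real.rpow_neg_one, inv_div]
          ring

/-- **A model integral bound**: the integral
`∫_{0 ≤ z₁ ≤ 1/2} |(1−z₁,z₂)|^{−(2+α)} z₁^{−(1−α)} dz` is finite, and consequently by the
change of variables `y = (x₁z₁, x₂+x₁z₂)`,
`∫_{0 ≤ y₁ ≤ x₁/2} |x−y|^{−(2+α)} y₁^{−(1−α)} dy ≤ C x₁^{−1}` with `C = C(α)`. -/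
theorem model_integral_bound (α : ℝ) (hα0 : 0 < α) (hα1 : α < 1) :
    IntegrableOn
      (fun z : Pt => (‖mk2 (1 - z 0) (z 1)‖ ^ (2 + α))⁻¹ * ((z 0) ^ (1 - α))⁻¹)
      {z : Pt | 0 ≤ z 0 ∧ z 0 ≤ 1 / 2} volume ∧
    ∃ C : ℝ, 0 < C ∧
      ∀ x : Pt, x ∈ halfPlane →
        (∫ y in {y : Pt | 0 ≤ y 0 ∧ y 0 ≤ x 0 / 2},
            (‖x - y‖ ^ (2 + α))⁻¹ * ((y 0) ^ (1 - α))⁻¹)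
          ≤ C * (x 0)⁻¹ :=
  model_integral_bound_general α hα0
end
end

section
/- Let α ∈ (0,1) and let θ : closure of ℝ²₊ → ℝ be continuous with supp θ ⊂ B(0;1) and ‖∂₂θ‖_{L^∞} < ∞. Define U₂(x) := −(2/α)∫_ℝ θ(0,y₂)|x−(0,y₂)|^{−α} dy₂. Then for every x ∈ ℝ²₊ the change of variables y₂ = x₂ + z x₁ yields the identity ∂₁U₂(x) = 2∫_ℝ x₁ θ(0,y₂) |x−(0,y₂)|^{−(α+2)} dy₂ = 2 x₁^{−α} ∫_ℝ θ(0, x₂ + z x₁) (1+z²)^{−(α/2+1)} dz, and the remainder satisfies |2 x₁^{−α} ∫_ℝ (θ(0, x₂ + z x₁) − θ(0, x₂)) (1+z²)^{−(α/2+1)} dz| ≤ C x₁^{1−α} ‖∂₂θ‖_{L^∞} with C depending only on α. -/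
noncomputable section

open MeasureTheory Real Set ENNReal NNReal

/-- The boundary contribution `U₂(x) = −(2/α) ∫_ℝ θ(0,y₂) |x−(0,y₂)|^{−α} dy₂`. -/
def U2 (α : ℝ) (θ : Pt → ℝ) (x : Pt) : ℝ :=
  -(2 / α) * ∫ y₂ : ℝ, θ (mk2 0 y₂) * (‖x - mk2 0 y₂‖ ^ α)⁻¹

/-!
For `x₁ > 0` the point `x` stays at distance at least `x₁` from the boundary line, so on the ball
`B(x, x₁/2)` the kernel `|x − (0,y₂)|^{−α}` and its gradient are bounded uniformly in `y₂`, and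
`∂₁` passes under the integral by dominated convergence. The substitution `y₂ = x₂ + z x₁` turns
`x₁ |x − (0,y₂)|^{−(α+2)} dy₂` into `x₁^{−α} (1+z²)^{−(α/2+1)} dz`. Finally the trace of `θ` is
`‖∂₂θ‖_∞`-Lipschitz, so the remainder integrand is at most
`‖∂₂θ‖_∞ x₁ |z| (1+z²)^{−(α/2+1)} ≤ ‖∂₂θ‖_∞ x₁ (1+z²)^{−(α+1)/2}`, integrable since `α > 0`.
-/

theorem sq_rpow_of_nonneg {t : ℝ} (ht : 0 ≤ t) (β : ℝ) : (t ^ 2) ^ β = t ^ (2 * β) := by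
  exact_mod_cast (rpow_natCast_mul ht 2 β).symm

section RieszKernel

variable {E : Type*} [NormedAddCommGroup E]
variable {Y : Type*} [MeasurableSpace Y] {μ : Measure Y} {g : Y → ℝ} {γ : Y → E}

theorem MeasureTheory.AEStronglyMeasurable.aemeasurable_norm_const_sub_rpow
    (hγ : AEStronglyMeasurable γ μ) (x : E) (β : ℝ) :
    AEMeasurable (fun y => ‖x - γ y‖ ^ β) μ :=
  (aestronglyMeasurable_const.sub hγ).norm.aemeasurable.pow_const β

theorem integrable_mul_inv_norm_sub_rpow {α δ : ℝ} (hα : 0 ≤ α) (hδ : 0 < δ)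
    (hg : Integrable g μ) (hγ : AEStronglyMeasurable γ μ) {x : E}
    (hsep : ∀ y, δ ≤ ‖x - γ y‖) :
    Integrable (fun y => g y * (‖x - γ y‖ ^ α)⁻¹) μ := by
  refine hg.mul_bdd (hγ.aemeasurable_norm_const_sub_rpow x α).inv.aestronglyMeasurable
    (c := (δ ^ α)⁻¹) (ae_of_all _ fun y => ?_)
  rw [norm_inv, Real.norm_of_nonneg (by positivity)]
  exact inv_anti₀ (by positivity) (rpow_le_rpow hδ.le (hsep y) hα)

variable [InnerProductSpace ℝ E]

theorem hasFDerivAt_inv_norm_sub_rpow (α : ℝ) {p x : E} (hx : x ≠ p) :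
    HasFDerivAt (fun x => (‖x - p‖ ^ α)⁻¹)
      ((-α * ‖x - p‖ ^ (-(α + 2))) • innerSL ℝ (x - p)) x := by
  have hsq : HasFDerivAt (fun x => ‖x - p‖ ^ 2) ((2 : ℝ) • innerSL ℝ (x - p)) x := by
    simpa [two_smul, two_nsmul] using ((hasFDerivAt_id x).sub_const p).norm_sq
  have hpow := hsq.rpow_const (p := -(α / 2))
    (Or.inl (pow_ne_zero 2 (norm_ne_zero_iff.2 (sub_ne_zero.2 hx))))
  simp only [sq_rpow_of_nonneg (norm_nonneg _), smul_smul] at hpow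
  convert hpow using 1
  · ext y
    rw [← rpow_neg (norm_nonneg _)]
    ring_nf
  · congr 1
    ring_nf

theorem norm_mul_rpow_smul_innerSL_le {α δ : ℝ} (hα : 0 ≤ α) (hδ : 0 < δ) {v : E}
    (hv : δ ≤ ‖v‖) (c : ℝ) :
    ‖(c * ‖v‖ ^ (-(α + 2))) • innerSL ℝ v‖ ≤ |c| * δ ^ (-(α + 1)) := by
  have hv0 : ‖v‖ ≠ 0 := (hδ.trans_le hv).ne'
  calc ‖(c * ‖v‖ ^ (-(α + 2))) • innerSL ℝ v‖ = |c| * ‖v‖ ^ (-(α + 1)) := by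
        rw [norm_smul, innerSL_apply_norm, Real.norm_eq_abs, abs_mul,
          abs_of_nonneg (rpow_nonneg (norm_nonneg v) _), show -(α + 1) = -(α + 2) + 1 by ring,
          rpow_add_one hv0, mul_assoc]
    _ ≤ |c| * δ ^ (-(α + 1)) :=
        mul_le_mul_of_nonneg_left (rpow_le_rpow_of_nonpos hδ hv (by linarith)) (abs_nonneg c)

theorem integrable_mul_rpow_smul_innerSL {α δ : ℝ} (hα : 0 ≤ α) (hδ : 0 < δ)
    (hg : Integrable g μ) (hγ : AEStronglyMeasurable γ μ) {x : E}
    (hsep : ∀ y, δ ≤ ‖x - γ y‖) (c : ℝ) :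
    Integrable (fun y => (g y * c * ‖x - γ y‖ ^ (-(α + 2))) • innerSL ℝ (x - γ y)) μ := by
  refine ((hg.mul_const c).abs.mul_const (δ ^ (-(α + 1)))).mono' ?_
    (ae_of_all _ fun y => norm_mul_rpow_smul_innerSL_le hα hδ (hsep y) _)
  exact ((hg.aestronglyMeasurable.mul_const c).mul
    (hγ.aemeasurable_norm_const_sub_rpow x _).aestronglyMeasurable).smul
    ((innerSL ℝ).continuous.comp_aestronglyMeasurable (aestronglyMeasurable_const.sub hγ))

theorem hasFDerivAt_integral_mul_inv_norm_sub_rpow {α δ : ℝ} (hα : 0 ≤ α) (hδ : 0 < δ)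
    (hg : Integrable g μ) (hγ : AEStronglyMeasurable γ μ) {x : E}
    (hsep : ∀ y, δ ≤ ‖x - γ y‖) :
    HasFDerivAt (fun x => ∫ y, g y * (‖x - γ y‖ ^ α)⁻¹ ∂μ)
      (∫ y, (g y * -α * ‖x - γ y‖ ^ (-(α + 2))) • innerSL ℝ (x - γ y) ∂μ) x := by
  have hsep_ball : ∀ x' ∈ Metric.ball x (δ / 2), ∀ y, δ / 2 ≤ ‖x' - γ y‖ := by
    intro x' hx' y
    have hxx' : ‖x - x'‖ < δ / 2 := by rwa [← dist_eq_norm, dist_comm]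
    linarith [hsep y, norm_sub_le_norm_sub_add_norm_sub x x' (γ y)]
  refine hasFDerivAt_integral_of_dominated_of_fderiv_le (Metric.ball_mem_nhds x (half_pos hδ))
    (bound := fun y => |g y * -α| * (δ / 2) ^ (-(α + 1))) ?_
    (integrable_mul_inv_norm_sub_rpow hα hδ hg hγ hsep)
    (integrable_mul_rpow_smul_innerSL hα hδ hg hγ hsep (-α)).aestronglyMeasurable
    (ae_of_all _ fun y x' hx' =>
      norm_mul_rpow_smul_innerSL_le hα (half_pos hδ) (hsep_ball x' hx' y) _)
    ((hg.mul_const (-α)).abs.mul_const _)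
    (ae_of_all _ fun y x' hx' => ?_)
  · filter_upwards [Metric.ball_mem_nhds x (half_pos hδ)] with x' hx'
    exact (integrable_mul_inv_norm_sub_rpow hα (half_pos hδ) hg hγ
      (hsep_ball x' hx')).aestronglyMeasurable
  · have hx'y : x' ≠ γ y :=
      sub_ne_zero.1 (norm_pos_iff.1 ((half_pos hδ).trans_le (hsep_ball x' hx' y)))
    exact ((hasFDerivAt_inv_norm_sub_rpow α hx'y).const_mul (g y)).congr_fderiv
      (by rw [smul_smul, mul_assoc])

end RieszKernel

theorem integral_comp_add_mul (f : ℝ → ℝ) {a : ℝ} (ha : 0 < a) (b : ℝ) :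
    ∫ z, f (b + z * a) = a⁻¹ * ∫ y, f y := by
  rw [Measure.integral_comp_mul_right (fun t => f (b + t)), integral_add_left_eq_self,
    abs_of_pos (inv_pos.2 ha), smul_eq_mul]

theorem integral_mul_inv_sq_add_sq_rpow (g : ℝ → ℝ) {a : ℝ} (ha : 0 < a) (b β : ℝ) :
    ∫ y, a * g y * ((a ^ 2 + (b - y) ^ 2) ^ β)⁻¹
      = a ^ (2 - 2 * β) * ∫ z, g (b + z * a) * ((1 + z ^ 2) ^ β)⁻¹ := by
  have hsubst : ∀ z, a * g (b + z * a) * ((a ^ 2 + (b - (b + z * a)) ^ 2) ^ β)⁻¹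
      = a ^ (1 - 2 * β) * (g (b + z * a) * ((1 + z ^ 2) ^ β)⁻¹) := by
    intro z
    rw [show a ^ 2 + (b - (b + z * a)) ^ 2 = a ^ 2 * (1 + z ^ 2) by ring,
      mul_rpow (by positivity) (by positivity), sq_rpow_of_nonneg ha.le, rpow_sub ha,
      Real.rpow_one]
    field_simp
  have h := integral_comp_add_mul (fun y => a * g y * ((a ^ 2 + (b - y) ^ 2) ^ β)⁻¹) ha b
  simp only [hsubst, integral_const_mul] at h
  rw [eq_inv_mul_iff_mul_eq₀ ha.ne'] at h
  rw [← h, ← mul_assoc, show (2 : ℝ) - 2 * β = 1 + (1 - 2 * β) by ring, rpow_add ha,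
    Real.rpow_one]

theorem abs_mul_inv_one_add_sq_rpow_le (α z : ℝ) :
    |z| * ((1 + z ^ 2) ^ (α / 2 + 1))⁻¹ ≤ (1 + z ^ 2) ^ (-(α + 1) / 2) := by
  calc |z| * ((1 + z ^ 2) ^ (α / 2 + 1))⁻¹
      ≤ (1 + z ^ 2) ^ (1 / 2 : ℝ) * ((1 + z ^ 2) ^ (α / 2 + 1))⁻¹ := by
        gcongr
        rw [← Real.sqrt_eq_rpow, ← sqrt_sq_eq_abs]
        exact Real.sqrt_le_sqrt (by linarith)
    _ = (1 + z ^ 2) ^ (-(α + 1) / 2) := by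
        rw [← Real.rpow_neg (by positivity), ← Real.rpow_add (by positivity)]
        ring_nf

theorem integrable_one_add_sq_rpow {s : ℝ} (hs : 1 < s) :
    Integrable fun z : ℝ => (1 + z ^ 2) ^ (-s / 2) := by
  simpa using
    integrable_rpow_neg_one_add_norm_sq (E := ℝ) (μ := volume) (r := s) (by simpa using hs)

theorem integral_one_add_sq_rpow_pos {s : ℝ} (hs : 1 < s) :
    0 < ∫ z : ℝ, (1 + z ^ 2) ^ (-s / 2) := by
  rw [integral_pos_iff_support_of_nonneg (fun z => by positivity) (integrable_one_add_sq_rpow hs)]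
  have hne : ∀ z : ℝ, (1 + z ^ 2) ^ (-s / 2) ≠ 0 :=
    fun z => (rpow_pos_of_pos (by positivity) _).ne'
  simp [Function.support, hne]

theorem abs_integral_sub_mul_inv_one_add_sq_rpow_le {g : ℝ → ℝ} {L : ℝ≥0}
    (hg : LipschitzWith L g) {α : ℝ} (hα : 0 < α) {a : ℝ} (ha : 0 < a) (b : ℝ) :
    |∫ z, (g (b + z * a) - g b) * ((1 + z ^ 2) ^ (α / 2 + 1))⁻¹|
      ≤ (∫ z : ℝ, (1 + z ^ 2) ^ (-(α + 1) / 2)) * a * L := by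
  rw [← Real.norm_eq_abs, ← integral_mul_const, ← integral_mul_const]
  refine norm_integral_le_of_norm_le
    (((integrable_one_add_sq_rpow (by linarith)).mul_const _).mul_const _) (ae_of_all _ fun z => ?_)
  have hlip : |g (b + z * a) - g b| ≤ L * (|z| * a) := by
    simpa [Real.dist_eq, abs_mul, abs_of_pos ha] using hg.dist_le_mul (b + z * a) b
  calc ‖(g (b + z * a) - g b) * ((1 + z ^ 2) ^ (α / 2 + 1))⁻¹‖
      = |g (b + z * a) - g b| * ((1 + z ^ 2) ^ (α / 2 + 1))⁻¹ := by
        rw [Real.norm_eq_abs, abs_mul,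
          abs_of_nonneg (a := ((1 + z ^ 2) ^ (α / 2 + 1))⁻¹) (by positivity)]
    _ ≤ L * (|z| * a) * ((1 + z ^ 2) ^ (α / 2 + 1))⁻¹ := by gcongr
    _ = L * a * (|z| * ((1 + z ^ 2) ^ (α / 2 + 1))⁻¹) := by ring
    _ ≤ L * a * (1 + z ^ 2) ^ (-(α + 1) / 2) := by
        gcongr
        exact abs_mul_inv_one_add_sq_rpow_le α z
    _ = (1 + z ^ 2) ^ (-(α + 1) / 2) * a * L := by ring

theorem continuous_mk2_zero : Continuous (mk2 0) :=
  (PiLp.continuous_toLp 2 _).comp (by fun_prop)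

theorem norm_sub_mk2_zero_sq (x : Pt) (y : ℝ) : ‖x - mk2 0 y‖ ^ 2 = x 0 ^ 2 + (x 1 - y) ^ 2 := by
  simp [EuclideanSpace.norm_sq_eq, mk2, Fin.sum_univ_two]

theorem le_norm_sub_mk2_zero (x : Pt) (y : ℝ) : x 0 ≤ ‖x - mk2 0 y‖ :=
  (le_abs_self _).trans <| abs_le_of_sq_le_sq
    (by rw [norm_sub_mk2_zero_sq]; nlinarith [sq_nonneg (x 1 - y)]) (norm_nonneg _)

theorem norm_mk2_zero (y : ℝ) : ‖mk2 0 y‖ = |y| := by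
  rw [← sqrt_sq (norm_nonneg _), ← sqrt_sq_eq_abs]
  simpa using congrArg Real.sqrt (norm_sub_mk2_zero_sq 0 y)

theorem inner_sub_mk2_zero_single_zero (x : Pt) (y : ℝ) :
    inner ℝ (x - mk2 0 y) (EuclideanSpace.single 0 1) = x 0 := by
  simp [mk2, EuclideanSpace.inner_single_right]

theorem hasCompactSupport_trace {θ : Pt → ℝ}
    (hθ : closedHalfPlane ∩ Function.support θ ⊆ Metric.ball 0 1) :
    HasCompactSupport (fun y => θ (mk2 0 y)) := by
  refine HasCompactSupport.of_support_subset_isCompact (isCompact_closedBall 0 1) fun y hy => ?_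
  have hy' := hθ ⟨by simp [closedHalfPlane, mk2], hy⟩
  rw [mem_ball_zero_iff, norm_mk2_zero] at hy'
  rw [mem_closedBall_zero_iff, Real.norm_eq_abs]
  exact hy'.le

theorem pd_zero_U2 {α : ℝ} (hα : 0 < α) {θ : Pt → ℝ} (hθ : Integrable fun y => θ (mk2 0 y))
    {x : Pt} (hx : 0 < x 0) :
    pd 0 (U2 α θ) x = 2 * ∫ y₂ : ℝ, x 0 * θ (mk2 0 y₂) * (‖x - mk2 0 y₂‖ ^ (α + 2))⁻¹ := by
  have hγ := continuous_mk2_zero.aestronglyMeasurable (μ := volume)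
  have hU : HasFDerivAt (U2 α θ) _ x :=
    (hasFDerivAt_integral_mul_inv_norm_sub_rpow hα.le hx hθ hγ (le_norm_sub_mk2_zero x)).const_mul
      (-(2 / α))
  rw [pd, hU.fderiv, smul_apply, ContinuousLinearMap.integral_apply
    (integrable_mul_rpow_smul_innerSL hα.le hx hθ hγ (le_norm_sub_mk2_zero x) _), smul_eq_mul,
    ← integral_const_mul, ← integral_const_mul]
  congr 1 with y
  rw [smul_apply, innerSL_apply_apply, inner_sub_mk2_zero_single_zero,
    smul_eq_mul, rpow_neg (norm_nonneg _)]
  field_simp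

theorem integral_mul_inv_norm_sub_mk2_zero_rpow (θ : Pt → ℝ) {x : Pt} (hx : 0 < x 0) (α : ℝ) :
    ∫ y₂ : ℝ, x 0 * θ (mk2 0 y₂) * (‖x - mk2 0 y₂‖ ^ (α + 2))⁻¹
      = ((x 0) ^ α)⁻¹ * ∫ z : ℝ, θ (mk2 0 (x 1 + z * x 0)) * ((1 + z ^ 2) ^ (α / 2 + 1))⁻¹ := by
  have hnorm : ∀ y, ‖x - mk2 0 y‖ ^ (α + 2) = (x 0 ^ 2 + (x 1 - y) ^ 2) ^ (α / 2 + 1) := by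
    intro y
    rw [← norm_sub_mk2_zero_sq, sq_rpow_of_nonneg (norm_nonneg _)]
    ring_nf
  simp_rw [hnorm]
  rw [integral_mul_inv_sq_add_sq_rpow (fun y => θ (mk2 0 y)) hx,
    show (2 : ℝ) - 2 * (α / 2 + 1) = -α by ring, Real.rpow_neg hx.le]

theorem U2_derivative_identity_and_remainder_general (α : ℝ) (hα0 : 0 < α) :
    ∃ C : ℝ, 0 < C ∧
      ∀ (θ : Pt → ℝ) (D : ℝ), 0 ≤ D →
        Continuous θ →
        closedHalfPlane ∩ Function.support θ ⊆ Metric.ball 0 1 →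
        (∀ s : ℝ, DifferentiableAt ℝ (fun r => θ (mk2 0 r)) s) →
        (∀ s : ℝ, |deriv (fun r => θ (mk2 0 r)) s| ≤ D) →
        ∀ x ∈ halfPlane,
          pd 0 (U2 α θ) x
              = 2 * ∫ y₂ : ℝ, x 0 * θ (mk2 0 y₂) * (‖x - mk2 0 y₂‖ ^ (α + 2))⁻¹ ∧
          pd 0 (U2 α θ) x
              = 2 * ((x 0) ^ α)⁻¹
                  * ∫ z : ℝ, θ (mk2 0 (x 1 + z * x 0)) * ((1 + z ^ 2) ^ (α / 2 + 1))⁻¹ ∧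
          |2 * ((x 0) ^ α)⁻¹
              * ∫ z : ℝ,
                  (θ (mk2 0 (x 1 + z * x 0)) - θ (mk2 0 (x 1)))
                    * ((1 + z ^ 2) ^ (α / 2 + 1))⁻¹|
            ≤ C * (x 0) ^ (1 - α) * D := by
  set K := ∫ z : ℝ, (1 + z ^ 2) ^ (-(α + 1) / 2)
  refine ⟨2 * K, mul_pos two_pos (integral_one_add_sq_rpow_pos (by linarith)), ?_⟩
  intro θ D hD hθ hsupp hdiff hderiv x (hx : 0 < x 0)
  have htrace : Integrable fun y => θ (mk2 0 y) :=
    (hθ.comp continuous_mk2_zero).integrable_of_hasCompactSupport (hasCompactSupport_trace hsupp)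
  have hlip : LipschitzWith D.toNNReal fun y => θ (mk2 0 y) :=
    lipschitzWith_of_nnnorm_deriv_le hdiff fun s => by
      rw [← NNReal.coe_le_coe, coe_nnnorm, Real.coe_toNNReal _ hD, Real.norm_eq_abs]
      exact hderiv s
  have hpd := pd_zero_U2 hα0 htrace hx
  refine ⟨hpd, by rw [hpd, integral_mul_inv_norm_sub_mk2_zero_rpow θ hx, mul_assoc], ?_⟩
  have hrem := abs_integral_sub_mul_inv_one_add_sq_rpow_le hlip hα0 hx (x 1)
  rw [Real.coe_toNNReal _ hD] at hrem
  calc _ = 2 * ((x 0) ^ α)⁻¹ * |∫ z : ℝ, (θ (mk2 0 (x 1 + z * x 0)) - θ (mk2 0 (x 1)))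
              * ((1 + z ^ 2) ^ (α / 2 + 1))⁻¹| := by
        rw [abs_mul, abs_mul, abs_two, abs_of_pos (by positivity)]
    _ ≤ 2 * ((x 0) ^ α)⁻¹ * (K * x 0 * D) := by gcongr
    _ = 2 * K * (x 0) ^ (1 - α) * D := by
        rw [Real.rpow_sub hx, Real.rpow_one]
        ring

/-- **Identity and remainder bound for `∂₁U₂`** (from the proof of Lemma 2.1): for
continuous `θ` supported in `B(0;1)` whose boundary trace has derivative bounded by `D`,
`∂₁U₂(x) = 2∫_ℝ x₁ θ(0,y₂) |x−(0,y₂)|^{−(α+2)} dy₂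
        = 2 x₁^{−α} ∫_ℝ θ(0, x₂+z x₁) (1+z²)^{−(α/2+1)} dz`,
and the remainder after extracting `C_α x₁^{−α} θ(0,x₂)` is at most
`C x₁^{1−α} ‖∂₂θ‖_{L^∞}` with `C = C(α)`. -/
theorem U2_derivative_identity_and_remainder (α : ℝ) (hα0 : 0 < α) (hα1 : α < 1) :
    ∃ C : ℝ, 0 < C ∧
      ∀ (θ : Pt → ℝ) (D : ℝ), 0 ≤ D →
        Continuous θ →
        closedHalfPlane ∩ Function.support θ ⊆ Metric.ball 0 1 →
        (∀ s : ℝ, DifferentiableAt ℝ (fun r => θ (mk2 0 r)) s) →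
        (∀ s : ℝ, |deriv (fun r => θ (mk2 0 r)) s| ≤ D) →
        ∀ x ∈ halfPlane,
          pd 0 (U2 α θ) x
              = 2 * ∫ y₂ : ℝ, x 0 * θ (mk2 0 y₂) * (‖x - mk2 0 y₂‖ ^ (α + 2))⁻¹ ∧
          pd 0 (U2 α θ) x
              = 2 * ((x 0) ^ α)⁻¹
                  * ∫ z : ℝ, θ (mk2 0 (x 1 + z * x 0)) * ((1 + z ^ 2) ^ (α / 2 + 1))⁻¹ ∧
          |2 * ((x 0) ^ α)⁻¹
              * ∫ z : ℝ,
                  (θ (mk2 0 (x 1 + z * x 0)) - θ (mk2 0 (x 1)))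
                    * ((1 + z ^ 2) ^ (α / 2 + 1))⁻¹|
            ≤ C * (x 0) ^ (1 - α) * D :=
  U2_derivative_identity_and_remainder_general α hα0
end
end
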